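/- Let 𝒜 be an L-structure, ℬ an L'-structure, and (g, f) a semi-retraction between 𝒜 and ℬ. Let ā and b̄ be finite tuples from 𝒜 each of which enumerates a substructure of 𝒜 (i.e., the range of each tuple is the underlying set of a substructure of 𝒜). Then for every finite tuple b̄₀' from ℬ with the same quantifier-free type in ℬ as g(b̄), the following holds: for every tuple c̄₁ of length |ā| whose entries lie in the substructure of 𝒜 generated by the range of f(b̄₀') and which has the same quantifier-free type in 𝒜 as ā, every entry of c̄₁ lies in the image under f of the range of b̄₀', and the unique tuple c̄₀ from the range of b̄₀' with f(c̄₀) = c̄₁ (entrywise) has the same quantifier-free type in ℬ as g(ā). (In the paper's terminology: b̄₀' has the restricted inverse images under f property for ā witnessed by g(ā).) -/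

import Mathlib

/-!
The tuple `f ∘ b₀'` has the quantifier-free type of `b`, and the fact that the range of a tuple is
closed under the function symbols is expressed by quantifier-free formulas, so the range of
`f ∘ b₀'` is a substructure like that of `b`; hence `c₁` lies in it. Writing `c₀ = b₀' ∘ j`, the
tuple `b ∘ j` has the type of `f ∘ b₀' ∘ j = c₁`, hence of `a`, and `g` carries this to
`c₀ ∼ g ∘ b ∘ j ∼ g ∘ a`.
-/

open FirstOrder FirstOrder.Language

/-- Two same-length tuples have the same quantifier-free type over ∅. -/
def SameQfType (L : FirstOrder.Language) (M : Type*) [L.Structure M] {n : ℕ}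
    (x y : Fin n → M) : Prop :=
  ∀ φ : L.Formula (Fin n), φ.IsQF → (φ.Realize x ↔ φ.Realize y)

/-- A qftp-respecting injection between structures in possibly different languages. -/
def QftpRespecting (L L' : FirstOrder.Language) (M N : Type*) [L.Structure M] [L'.Structure N]
    (h : M → N) : Prop :=
  Function.Injective h ∧
    ∀ (n : ℕ) (x y : Fin n → M), SameQfType L M x y → SameQfType L' N (h ∘ x) (h ∘ y)

/-- `(g, f)` is a semi-retraction between `M` and `N`: both maps are qftp-respecting
injections and `f ∘ g` is qftp-preserving (equivalently, an `L`-embedding of `M` into `M`). -/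
def IsSemiRetraction (L L' : FirstOrder.Language) (M N : Type*)
    [L.Structure M] [L'.Structure N] (g : M → N) (f : N → M) : Prop :=
  QftpRespecting L L' M N g ∧ QftpRespecting L' L N M f ∧
    ∀ (n : ℕ) (x : Fin n → M), SameQfType L M x (f ∘ g ∘ x)

/-- `M` is locally finite: every finitely generated substructure is finite. -/
def StructLocallyFinite (L : FirstOrder.Language) (M : Type*) [L.Structure M] : Prop :=
  ∀ S : L.Substructure M, S.FG → (S : Set M).Finite

/-- `M → (B)^A_{r,d}` for substructures. -/
def ArrowSub (L : FirstOrder.Language) (M : Type*) [L.Structure M]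
    (A B : L.Substructure M) (r d : ℕ) : Prop :=
  ∀ c : L.Substructure M → Fin r, ∃ B' : L.Substructure M,
    Nonempty (B' ≃[L] B) ∧
      (c '' {A' : L.Substructure M | A' ≤ B' ∧ Nonempty (A' ≃[L] A)}).ncard ≤ d

/-- `M →ᵉ (B)^A_{r,d}` for embeddings. -/
def ArrowEmb (L : FirstOrder.Language) (M : Type*) [L.Structure M]
    (A B : L.Substructure M) (r d : ℕ) : Prop :=
  ∀ c : (A ↪[L] M) → Fin r, ∃ h : B ↪[L] M,
    (c '' {j : A ↪[L] M | ∃ e : A ↪[L] B, j = h.comp e}).ncard ≤ d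

/-- A structure is rigid if its only automorphism is the identity. -/
def IsRigidStructure (L : FirstOrder.Language) (M : Type*) [L.Structure M] : Prop :=
  ∀ σ : M ≃[L] M, ∀ x : M, σ x = x

namespace SameQfType

variable {L : FirstOrder.Language} {M : Type*} [L.Structure M] {n : ℕ} {x y z : Fin n → M}

lemma symm (h : SameQfType L M x y) : SameQfType L M y x := fun φ hφ => (h φ hφ).symm

lemma trans (h : SameQfType L M x y) (h' : SameQfType L M y z) : SameQfType L M x z :=
  fun φ hφ => (h φ hφ).trans (h' φ hφ)

lemma comp {p : ℕ} (h : SameQfType L M x y) (j : Fin p → Fin n) :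
    SameQfType L M (x ∘ j) (y ∘ j) := by
  intro φ hφ
  rw [← Formula.realize_relabel, ← Formula.realize_relabel]
  exact h (φ.relabel j) (hφ.relabel _)

lemma funMap_comp_eq_iff (h : SameQfType L M x y) {p : ℕ} (F : L.Functions p)
    (σ : Fin p → Fin n) (j : Fin n) :
    Structure.funMap F (x ∘ σ) = x j ↔ Structure.funMap F (y ∘ σ) = y j := by
  have := h (Term.equal (Term.func F fun i => Term.var (σ i)) (Term.var j))
    (BoundedFormula.IsAtomic.equal _ _).isQF
  simpa only [Formula.realize_equal, Term.realize_func, Term.realize_var, Function.comp_def]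
    using this

lemma closure_range_eq (h : SameQfType L M x y)
    (hy : (Substructure.closure L (Set.range y) : Set M) = Set.range y) :
    (Substructure.closure L (Set.range x) : Set M) = Set.range x := by
  let S : L.Substructure M :=
    { carrier := Set.range x
      fun_mem := fun {p} F xs hxs => by
        choose σ hσ using hxs
        obtain ⟨j, hj⟩ : Structure.funMap F (y ∘ σ) ∈ Set.range y := by
          rw [← hy]
          exact Substructure.fun_mem _ F _ fun i =>
            Substructure.subset_closure (Set.mem_range_self (σ i))
        refine ⟨j, ?_⟩
        rw [← funext hσ]
        exact ((h.funMap_comp_eq_iff F σ j).2 hj.symm).symm }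
  exact le_antisymm (Substructure.closure_le (S := S).2 le_rfl) Substructure.subset_closure

end SameQfType

lemma IsSemiRetraction.sameQfType_comp_of_sameQfType_comp
    {L L' : FirstOrder.Language} {M N : Type*} [L.Structure M] [L'.Structure N]
    {g : M → N} {f : N → M} (hsr : IsSemiRetraction L L' M N g f) {n : ℕ}
    {y : Fin n → N} {x : Fin n → M} (h : SameQfType L' N y (g ∘ x)) :
    SameQfType L M (f ∘ y) x :=
  (hsr.2.1.2 n y (g ∘ x) h).trans (hsr.2.2 n x).symm

theorem restricted_inverse_images_under_f_general
    {L L' : FirstOrder.Language} {M N : Type*} [L.Structure M] [L'.Structure N]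
    (g : M → N) (f : N → M)
    (hsr : IsSemiRetraction L L' M N g f)
    {m k : ℕ} (a : Fin m → M) (b : Fin k → M)
    (hb : ((Substructure.closure L (Set.range b) : L.Substructure M) : Set M) = Set.range b)
    (b₀' : Fin k → N) (hb₀' : SameQfType L' N b₀' (g ∘ b))
    (c₁ : Fin m → M)
    (hc₁mem : ∀ i, c₁ i ∈ Substructure.closure L (Set.range (f ∘ b₀')))
    (hc₁tp : SameQfType L M c₁ a) :
    (∀ i, ∃ j, f (b₀' j) = c₁ i) ∧
      ∀ c₀ : Fin m → N, (∀ i, ∃ j, c₀ i = b₀' j) → (∀ i, f (c₀ i) = c₁ i) →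
        SameQfType L' N c₀ (g ∘ a) := by
  have hfb : SameQfType L M (f ∘ b₀') b := hsr.sameQfType_comp_of_sameQfType_comp hb₀'
  have hclosed := hfb.closure_range_eq hb
  have hmem : ∀ i, ∃ j, f (b₀' j) = c₁ i := fun i => by
    simpa [← SetLike.mem_coe, hclosed] using hc₁mem i
  refine ⟨hmem, fun c₀ hc₀ hfc₀ => ?_⟩
  choose j hj using hc₀
  have hc₀_eq : c₀ = b₀' ∘ j := funext hj
  have hc₁_eq : c₁ = (f ∘ b₀') ∘ j := funext fun i => by simp [← hfc₀ i, hj i]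
  have hbj_a : SameQfType L M (b ∘ j) a := (hc₁_eq ▸ hfb.comp j).symm.trans hc₁tp
  exact hc₀_eq ▸ (hb₀'.comp j).trans (hsr.1.2 m (b ∘ j) a hbj_a)

/-- Proposition 5.12 / `prop_fcn_restricted`: given a semi-retraction `(g, f)`
between `𝒜` and `ℬ` and finite tuples `ā, b̄` enumerating substructures of `𝒜`, every tuple
`b̄₀'` with the same quantifier-free type in `ℬ` as `g(b̄)` has the restricted inverse images
under `f` property for `ā` witnessed by `g(ā)`. -/
theorem restricted_inverse_images_under_f
    {L L' : FirstOrder.Language} {M N : Type*} [L.Structure M] [L'.Structure N]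
    (g : M → N) (f : N → M)
    (hsr : IsSemiRetraction L L' M N g f)
    {m k : ℕ} (a : Fin m → M) (b : Fin k → M)
    (ha : ((Substructure.closure L (Set.range a) : L.Substructure M) : Set M) = Set.range a)
    (hb : ((Substructure.closure L (Set.range b) : L.Substructure M) : Set M) = Set.range b)
    (b₀' : Fin k → N) (hb₀' : SameQfType L' N b₀' (g ∘ b))
    (c₁ : Fin m → M)
    (hc₁mem : ∀ i, c₁ i ∈ Substructure.closure L (Set.range (f ∘ b₀')))
    (hc₁tp : SameQfType L M c₁ a) :
    (∀ i, ∃ j, f (b₀' j) = c₁ i) ∧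
      ∀ c₀ : Fin m → N, (∀ i, ∃ j, c₀ i = b₀' j) → (∀ i, f (c₀ i) = c₁ i) →
        SameQfType L' N c₀ (g ∘ a) :=
  restricted_inverse_images_under_f_general g f hsr a b hb b₀' hb₀' c₁ hc₁mem hc₁tp
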